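/- The quadratic integral of the Routh sphere is expressed through the linear ones: on the region where g(γ) > 0, the identity H2 = I1·H1 + ((I3 − I1)/I1)·Ĥ2² − (m/I1)·H3² holds, where H1 = (M, ω), H2 = (M, M) − m(r, r)·H1, H3 = (M, r) and Ĥ2 = g(γ)·ω3. -/

import Mathlib

noncomputable section

/-- Phase-space factor `ℝ³`. -/
abbrev V3 : Type := Fin 3 → ℝ

/-- Euclidean inner product `(u, v)` on `ℝ³`. -/
def dot3 (u v : V3) : ℝ := u 0 * v 0 + u 1 * v 1 + u 2 * v 2

/-- Cross product `u × v` on `ℝ³`. -/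
def cross3 (u v : V3) : V3 :=
  ![u 1 * v 2 - u 2 * v 1, u 2 * v 0 - u 0 * v 2, u 0 * v 1 - u 1 * v 0]

/-- The vector `r = (Rγ₁, Rγ₂, Rγ₃ + a)` joining the center of mass with the contact point. -/
def rvec (R a : ℝ) (γ : V3) : V3 := ![R * γ 0, R * γ 1, R * γ 2 + a]

/-- The tensor `I_Q = I + m (r,r) E − m r ⊗ r` with `I = diag (I1, I1, I3)`. -/
def IQ (m R I1 I3 a : ℝ) (γ : V3) : Matrix (Fin 3) (Fin 3) ℝ :=
  Matrix.diagonal ![I1, I1, I3]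
    + (m * dot3 (rvec R a γ) (rvec R a γ)) • (1 : Matrix (Fin 3) (Fin 3) ℝ)
    - m • Matrix.of (fun i j => rvec R a γ i * rvec R a γ j)

/-- The angular velocity `ω`, defined by `M = I_Q ω`. -/
def omega3 (m R I1 I3 a : ℝ) (γ M : V3) : V3 := ((IQ m R I1 I3 a γ)⁻¹).mulVec M

/-- The density `g(γ)` of the invariant measure. -/
def gR (m R I1 I3 a : ℝ) (γ : V3) : ℝ :=
  Real.sqrt (I1 * I3 + I1 * m * R ^ 2 * (dot3 γ γ - γ 2 ^ 2) + I3 * m * (R * γ 2 + a) ^ 2)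

/-- The Routh-sphere vector field: `γ' = γ × ω`, `M' = M × ω + m r' × (ω × r)`,
`r' = R (γ × ω)`. -/
def XR (m R I1 I3 a : ℝ) (p : V3 × V3) : V3 × V3 :=
  (cross3 p.1 (omega3 m R I1 I3 a p.1 p.2),
   cross3 p.2 (omega3 m R I1 I3 a p.1 p.2)
     + m • cross3 (R • cross3 p.1 (omega3 m R I1 I3 a p.1 p.2))
         (cross3 (omega3 m R I1 I3 a p.1 p.2) (rvec R a p.1)))

/-- `H₁ = (M, ω)`. -/
def H1R (m R I1 I3 a : ℝ) (p : V3 × V3) : ℝ := dot3 p.2 (omega3 m R I1 I3 a p.1 p.2)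

/-- `H₂ = (M, M) − m (r, r) H₁`. -/
def H2R (m R I1 I3 a : ℝ) (p : V3 × V3) : ℝ :=
  dot3 p.2 p.2 - m * dot3 (rvec R a p.1) (rvec R a p.1) * H1R m R I1 I3 a p

/-- The Jellet integral `H₃ = (M, r)`. -/
def H3R (R a : ℝ) (p : V3 × V3) : ℝ := dot3 p.2 (rvec R a p.1)

/-- `H₄ = (γ, γ)`. -/
def H4R (p : V3 × V3) : ℝ := dot3 p.1 p.1

/-- The Routh integral `Ĥ₂ = g(γ) ω₃`. -/
def Hhat2R (m R I1 I3 a : ℝ) (p : V3 × V3) : ℝ :=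
  gR m R I1 I3 a p.1 * omega3 m R I1 I3 a p.1 p.2 2

/-! Writing `M = I_Q ω`, every term of the identity becomes a polynomial in `ω`, `r` and the
constants, once `g²` is rewritten as `I₁I₃ + I₁m(r₁² + r₂²) + I₃m r₃²`; after clearing the
denominator `I₁` the identity is then a polynomial identity, valid for every `ω` and `r`. -/

def contactInertia (m I1 I3 : ℝ) (r : V3) : Matrix (Fin 3) (Fin 3) ℝ :=
  Matrix.diagonal ![I1, I1, I3] + (m * dot3 r r) • (1 : Matrix (Fin 3) (Fin 3) ℝ)
    - m • Matrix.of (fun i j => r i * r j)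

def routhDensitySq (m I1 I3 : ℝ) (r : V3) : ℝ :=
  I1 * I3 + I1 * m * (r 0 ^ 2 + r 1 ^ 2) + I3 * m * r 2 ^ 2

theorem IQ_eq_contactInertia (m R I1 I3 a : ℝ) (γ : V3) :
    IQ m R I1 I3 a γ = contactInertia m I1 I3 (rvec R a γ) := rfl

theorem contactInertia_quadratic_identity (m I1 I3 : ℝ) (r ω : V3) :
    let M := (contactInertia m I1 I3 r).mulVec ω
    I1 * (dot3 M M - m * dot3 r r * dot3 M ω) =
      I1 ^ 2 * dot3 M ω + (I3 - I1) * routhDensitySq m I1 I3 r * ω 2 ^ 2 - m * dot3 M r ^ 2 := by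
  simp only [contactInertia, routhDensitySq, dot3, Matrix.mulVec, dotProduct, Fin.sum_univ_three,
    Matrix.sub_apply, Matrix.add_apply, Matrix.smul_apply, Matrix.diagonal_apply, Matrix.one_apply,
    Matrix.of_apply, Matrix.cons_val_zero, Matrix.cons_val_one, Matrix.cons_val_two,
    Matrix.tail_cons, Matrix.head_cons, Fin.reduceEq, ↓reduceIte, smul_eq_mul]
  ring

theorem IQ_mulVec_omega3 {m R I1 I3 a : ℝ} {γ : V3} (hreg : IsUnit (IQ m R I1 I3 a γ).det)
    (M : V3) : (IQ m R I1 I3 a γ).mulVec (omega3 m R I1 I3 a γ M) = M := by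
  rw [omega3, Matrix.mulVec_mulVec, Matrix.mul_nonsing_inv _ hreg, Matrix.one_mulVec]

theorem gR_sq {m R I1 I3 a : ℝ} {γ : V3} (hg : 0 < gR m R I1 I3 a γ) :
    gR m R I1 I3 a γ ^ 2 = routhDensitySq m I1 I3 (rvec R a γ) := by
  rw [gR, Real.sq_sqrt (Real.sqrt_pos.mp hg).le]
  simp only [routhDensitySq, rvec, dot3, Matrix.cons_val_zero, Matrix.cons_val_one,
    Matrix.cons_val_two, Matrix.tail_cons, Matrix.head_cons]
  ring

theorem routh_quadratic_integral_identity_general (m R I1 I3 a : ℝ) (hI1 : 0 < I1)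
    (p : V3 × V3) (hreg : IsUnit (IQ m R I1 I3 a p.1).det)
    (hg : 0 < gR m R I1 I3 a p.1) :
    H2R m R I1 I3 a p =
      I1 * H1R m R I1 I3 a p + (I3 - I1) / I1 * Hhat2R m R I1 I3 a p ^ 2
        - m / I1 * H3R R a p ^ 2 := by
  have key := contactInertia_quadratic_identity m I1 I3 (rvec R a p.1) (omega3 m R I1 I3 a p.1 p.2)
  rw [← IQ_eq_contactInertia, IQ_mulVec_omega3 hreg] at key
  rw [H2R, H1R, H3R, Hhat2R, mul_pow, gR_sq hg]
  field_simp
  linear_combination key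

/-- On the region where `g(γ) > 0`, the quadratic integral of the Routh sphere
is expressed through the linear ones:
`H₂ = I₁ H₁ + ((I₃ − I₁)/I₁) Ĥ₂² − (m/I₁) H₃²`, identically in `(γ, M)`. -/
theorem routh_quadratic_integral_identity (m R I1 I3 a : ℝ) (hm : 0 < m) (hR : 0 < R) (hI1 : 0 < I1) (hI3 : 0 < I3)
    (p : V3 × V3) (hreg : IsUnit (IQ m R I1 I3 a p.1).det)
    (hg : 0 < gR m R I1 I3 a p.1) :
    H2R m R I1 I3 a p =
      I1 * H1R m R I1 I3 a p + (I3 - I1) / I1 * Hhat2R m R I1 I3 a p ^ 2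
        - m / I1 * H3R R a p ^ 2 :=
  routh_quadratic_integral_identity_general m R I1 I3 a hI1 p hreg hg
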